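/- arXiv:2209.07579 — 3 statements merged into one kernel-verified Lean document; each statement's English description precedes it below -/
import Mathlib

section
/- Let 𝒢 be a DAG whose skeleton is a tree. An arrow i → j of 𝒢 is essential if and only if either (1) there is a node k such that i → j ← k is an induced subgraph of 𝒢, or (2) i is a descendant in 𝒢 of a node having at least two parents. -/
/-!
If `i → j` lies in a v-structure, or below a node with two parents, the orientation of that
v-structure is shared by every Markov-equivalent DAG, and since the skeleton is triangle-free it
propagates down every directed path (Meek's first rule), reaching `i → j`.

Otherwise every ancestor of `j` has at most one parent, so the ancestors of `j` form a directed
path ending in `j`. Reversing all arrows inside this ancestral set keeps the graph acyclic and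
creates or destroys no v-structure, since every node of the path has at most one parent before
and after the reversal; the result is Markov equivalent to `D` and contains `j → i`.
-/

open Classical

/-- A DAG on vertex type `V`: a directed graph (adjacency relation) with no directed cycles. -/
structure DAG (V : Type) where
  adj : V → V → Prop
  acyclic : ∀ v, ¬ Relation.TransGen adj v v

namespace DAG

variable {V : Type}

/-- The skeleton of a DAG: the undirected graph obtained by forgetting directions. -/
def skeleton (D : DAG V) : SimpleGraph V where
  Adj i j := D.adj i j ∨ D.adj j i
  symm := ⟨by intro i j h; exact h.symm⟩
  loopless := ⟨by
    intro i h
    rcases h with h | h <;> exact D.acyclic i (Relation.TransGen.single h)⟩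

/-- The characteristic imset of a DAG, as a vector indexed by finite vertex sets
(coordinates on sets of size `< 2` are identically zero). -/
noncomputable def imset (D : DAG V) (S : Finset V) : ℝ :=
  if 2 ≤ S.card ∧ ∃ i ∈ S, ∀ j ∈ S, j ≠ i → D.adj j i then 1 else 0

/-- `D.IsVStructure i j k` means `i → j ← k` is an induced subgraph of `D`
(`i` and `k` non-adjacent). -/
def IsVStructure (D : DAG V) (i j k : V) : Prop :=
  i ≠ k ∧ D.adj i j ∧ D.adj k j ∧ ¬ D.adj i k ∧ ¬ D.adj k i

end DAG

/-- Two DAGs are Markov equivalent iff they have the same skeleton and the same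
v-structures. -/
def MarkovEquiv {V : Type} (D E : DAG V) : Prop :=
  D.skeleton = E.skeleton ∧ ∀ i j k, D.IsVStructure i j k ↔ E.IsVStructure i j k

/-- An arrow `i → j` of `D` is essential if it occurs in every DAG Markov equivalent to `D`. -/
def DAG.Essential {V : Type} (D : DAG V) (i j : V) : Prop :=
  D.adj i j ∧ ∀ E : DAG V, MarkovEquiv D E → E.adj i j

/-- The characteristic imset polytope of an undirected graph `G`: the convex hull of the
characteristic imsets of all DAGs with skeleton `G`. -/
noncomputable def CIM {V : Type} (G : SimpleGraph V) : Set (Finset V → ℝ) :=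
  convexHull ℝ { f | ∃ D : DAG V, D.skeleton = G ∧ f = D.imset }

/-- `conv(u,v)` is an edge (one-dimensional face) of `P`: there is a linear functional whose
maximum over `P` is attained exactly on the segment from `u` to `v`. -/
def IsPolytopeEdge {E : Type*} [AddCommGroup E] [Module ℝ E] (P : Set E) (u v : E) : Prop :=
  u ≠ v ∧ ∃ φ : E →ₗ[ℝ] ℝ, (∀ x ∈ P, φ x ≤ φ u) ∧ ∀ x ∈ P, (φ x = φ u ↔ x ∈ segment ℝ u v)

/-- `P` is a simplex of dimension `d`: the convex hull of `d+1` affinely independent points. -/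
def IsSimplexOfDim {E : Type*} [AddCommGroup E] [Module ℝ E] (P : Set E) (d : ℕ) : Prop :=
  ∃ pts : Fin (d + 1) → E, AffineIndependent ℝ pts ∧ P = convexHull ℝ (Set.range pts)

/-- The standard basis vector indexed by `S`. -/
noncomputable def eVec {V : Type} (S : Finset V) : Finset V → ℝ :=
  fun T => if T = S then 1 else 0

open Relation

namespace DAG

variable {V : Type} {D : DAG V}

theorem adj_asymm {u v : V} (h : D.adj u v) : ¬ D.adj v u := fun h' =>
  D.acyclic u ((TransGen.single h).tail h')

theorem isVStructure_iff {a b c : V} :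
    D.IsVStructure a b c ↔ a ≠ c ∧ D.adj a b ∧ D.adj c b ∧ ¬ D.skeleton.Adj a c := by
  simp only [IsVStructure, skeleton, not_or]

theorem isVStructure_of_cliqueFree (hD : D.skeleton.CliqueFree 3) {a b c : V} (hac : a ≠ c)
    (ha : D.adj a b) (hc : D.adj c b) : D.IsVStructure a b c :=
  isVStructure_iff.2 ⟨hac, ha, hc,
    D.skeleton.isIndepSet_neighborSet_of_triangleFree hD b (Or.inr ha) (Or.inr hc) hac⟩

def IsAncestral (D : DAG V) (C : Set V) : Prop :=
  ∀ ⦃u v⦄, D.adj u v → v ∈ C → u ∈ C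

def ancestors (D : DAG V) (j : V) : Set V :=
  {v | ReflTransGen D.adj v j}

theorem isAncestral_ancestors (j : V) : D.IsAncestral (D.ancestors j) :=
  fun _ _ huv hv => hv.head huv

def reverseAdjOn (D : DAG V) (C : Set V) (u v : V) : Prop :=
  if u ∈ C ∧ v ∈ C then D.adj v u else D.adj u v

section ReverseOn

variable {C : Set V}

theorem reverseAdjOn_iff_of_mem_right (hC : D.IsAncestral C) {u v : V} (hv : v ∈ C) :
    D.reverseAdjOn C u v ↔ u ∈ C ∧ D.adj v u := by
  by_cases hu : u ∈ C
  · simp [reverseAdjOn, hu, hv]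
  · simp only [reverseAdjOn, hu, false_and, if_false, iff_false]
    exact fun h => hu (hC h hv)

theorem reverseAdjOn_iff_of_notMem_left {u v : V} (hu : u ∉ C) :
    D.reverseAdjOn C u v ↔ D.adj u v := by
  simp [reverseAdjOn, hu]

theorem reverseAdjOn_iff_of_notMem_right {u v : V} (hv : v ∉ C) :
    D.reverseAdjOn C u v ↔ D.adj u v := by
  simp [reverseAdjOn, hv]

theorem transGen_reverseAdjOn_of_mem (hC : D.IsAncestral C) {x y : V}
    (h : TransGen (D.reverseAdjOn C) x y) (hy : y ∈ C) : x ∈ C ∧ TransGen D.adj y x := by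
  induction h with
  | single h =>
    obtain ⟨hx, hyx⟩ := (reverseAdjOn_iff_of_mem_right hC hy).1 h
    exact ⟨hx, .single hyx⟩
  | tail _ hbc ih =>
    obtain ⟨hb, hcb⟩ := (reverseAdjOn_iff_of_mem_right hC hy).1 hbc
    obtain ⟨hx, hbx⟩ := ih hb
    exact ⟨hx, .head hcb hbx⟩

theorem transGen_reverseAdjOn_of_notMem (hC : D.IsAncestral C) {x y : V}
    (h : TransGen (D.reverseAdjOn C) x y) (hx : x ∉ C) : TransGen D.adj x y := by
  induction h using TransGen.head_induction_on with
  | single h => exact .single ((reverseAdjOn_iff_of_notMem_left hx).1 h)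
  | head hxz _ ih =>
    have hz := fun hz => hx ((reverseAdjOn_iff_of_mem_right hC hz).1 hxz).1
    exact .head ((reverseAdjOn_iff_of_notMem_left hx).1 hxz) (ih hz)

theorem reverseAdjOn_acyclic (hC : D.IsAncestral C) (v : V) :
    ¬ TransGen (D.reverseAdjOn C) v v := fun h => by
  by_cases hv : v ∈ C
  · exact D.acyclic v (transGen_reverseAdjOn_of_mem hC h hv).2
  · exact D.acyclic v (transGen_reverseAdjOn_of_notMem hC h hv)

def reverseOn (D : DAG V) (C : Set V) (hC : D.IsAncestral C) : DAG V :=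
  ⟨D.reverseAdjOn C, reverseAdjOn_acyclic hC⟩

theorem skeleton_reverseOn (hC : D.IsAncestral C) : (D.reverseOn C hC).skeleton = D.skeleton := by
  ext u v
  change D.reverseAdjOn C u v ∨ D.reverseAdjOn C v u ↔ D.adj u v ∨ D.adj v u
  unfold reverseAdjOn
  split_ifs <;> tauto

end ReverseOn

end DAG

namespace MarkovEquiv

variable {V : Type} {D E : DAG V}

theorem of_skeleton_eq (hskel : D.skeleton = E.skeleton)
    (hpar : ∀ b, (∀ a, D.adj a b ↔ E.adj a b) ∨
      ({a | D.adj a b}.Subsingleton ∧ {a | E.adj a b}.Subsingleton)) :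
    MarkovEquiv D E := by
  refine ⟨hskel, fun a b c => ?_⟩
  rw [DAG.isVStructure_iff, DAG.isVStructure_iff, hskel]
  rcases hpar b with h | ⟨hD, hE⟩
  · rw [h a, h c]
  · exact iff_of_false (fun ⟨hac, ha, hc, _⟩ => hac (hD ha hc))
      (fun ⟨hac, ha, hc, _⟩ => hac (hE ha hc))

theorem adj_of_not_skeleton_adj (hME : MarkovEquiv D E)
    {w v u : V} (hwv : E.adj w v) (hvu : D.adj v u) (hwu : w ≠ u)
    (hna : ¬ D.skeleton.Adj w u) : E.adj v u := by
  have hvu' : E.skeleton.Adj v u := hME.1 ▸ Or.inl hvu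
  refine hvu'.resolve_right fun huv => ?_
  have hvs : E.IsVStructure w v u := DAG.isVStructure_iff.2 ⟨hwu, hwv, huv, hME.1 ▸ hna⟩
  exact D.adj_asymm hvu ((hME.2 w v u).2 hvs).2.2.1

theorem adj_of_adj_of_adj (hME : MarkovEquiv D E) (hD : D.skeleton.CliqueFree 3)
    {w v u : V} (hwv : D.adj w v) (hwvE : E.adj w v) (hvu : D.adj v u) : E.adj v u := by
  have hwu : w ≠ u := fun h => D.adj_asymm hvu (h ▸ hwv)
  exact hME.adj_of_not_skeleton_adj hwvE hvu hwu
    (D.skeleton.isIndepSet_neighborSet_of_triangleFree hD v (Or.inr hwv) (Or.inl hvu) hwu)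

theorem adj_of_reflTransGen (hME : MarkovEquiv D E)
    (hD : D.skeleton.CliqueFree 3) {w a v u : V} (hwa : D.adj w a) (hwaE : E.adj w a)
    (hav : ReflTransGen D.adj a v) (hvu : D.adj v u) : E.adj v u := by
  induction hav generalizing u with
  | refl => exact hME.adj_of_adj_of_adj hD hwa hwaE hvu
  | tail _ hbc ih => exact hME.adj_of_adj_of_adj hD hbc (ih hbc) hvu

end MarkovEquiv

namespace DAG

variable {V : Type} {D : DAG V} {j : V}

theorem reflTransGen_total_of_mem_ancestors
    (h : ∀ v ∈ D.ancestors j, {q | D.adj q v}.Subsingleton) {u v : V}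
    (hu : u ∈ D.ancestors j) (hv : v ∈ D.ancestors j) :
    ReflTransGen D.adj u v ∨ ReflTransGen D.adj v u := by
  induction hu using ReflTransGen.head_induction_on with
  | refl => exact Or.inr hv
  | head huu' hu'j ih =>
    rcases ih with hu'v | hvu'
    · exact Or.inl (hu'v.head huu')
    · rcases hvu'.cases_tail with rfl | ⟨z, hvz, hzu'⟩
      · exact Or.inl (.single huu')
      · exact Or.inr (h _ hu'j hzu' huu' ▸ hvz)

theorem subsingleton_children_inter_ancestors
    (h : ∀ v ∈ D.ancestors j, {q | D.adj q v}.Subsingleton) (b : V) :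
    {x | D.adj b x ∧ x ∈ D.ancestors j}.Subsingleton := by
  have key : ∀ x y, D.adj b x → D.adj b y → y ∈ D.ancestors j →
      ReflTransGen D.adj x y → x = y := by
    intro x y hbx hby hy hxy
    rcases hxy.cases_tail with rfl | ⟨z, hxz, hzy⟩
    · rfl
    · exact absurd (TransGen.head' hbx (h y hy hzy hby ▸ hxz)) (D.acyclic b)
  rintro x ⟨hbx, hx⟩ y ⟨hby, hy⟩
  rcases reflTransGen_total_of_mem_ancestors h hx hy with hxy | hyx
  · exact key x y hbx hby hy hxy
  · exact (key y x hby hbx hx hyx).symm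

theorem markovEquiv_reverseOn_ancestors
    (h : ∀ v ∈ D.ancestors j, {q | D.adj q v}.Subsingleton) :
    MarkovEquiv D (D.reverseOn (D.ancestors j) (isAncestral_ancestors j)) := by
  refine .of_skeleton_eq (skeleton_reverseOn _).symm fun b => ?_
  by_cases hb : b ∈ D.ancestors j
  · refine Or.inr ⟨h b hb, (subsingleton_children_inter_ancestors h b).anti fun a ha => ?_⟩
    obtain ⟨ha, hba⟩ := (reverseAdjOn_iff_of_mem_right (isAncestral_ancestors j) hb).1 ha
    exact ⟨hba, ha⟩
  · exact Or.inl fun a => (reverseAdjOn_iff_of_notMem_right hb).symm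

theorem not_essential_of_subsingleton_parents
    (h : ∀ v ∈ D.ancestors j, {q | D.adj q v}.Subsingleton) (i : V) : ¬ D.Essential i j := by
  rintro ⟨hij, hess⟩
  have hij' := hess _ (markovEquiv_reverseOn_ancestors h)
  exact D.adj_asymm hij
    ((reverseAdjOn_iff_of_mem_right (isAncestral_ancestors j) ReflTransGen.refl).1 hij').2

end DAG

/-- **Characterization of essential arrows in a tree.**  Let `D` be a DAG whose skeleton is
a tree.  An arrow `i → j` of `D` is essential iff either (1) there is a node `k` such that
`i → j ← k` is an induced subgraph of `D`, or (2) `i` is a descendant of a node having at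
least two parents. -/
theorem essential_iff_in_tree {p : ℕ} (D : DAG (Fin p)) (htree : D.skeleton.IsTree)
    (i j : Fin p) (hij : D.adj i j) :
    D.Essential i j ↔
      ((∃ k, D.IsVStructure i j k) ∨
        (∃ a, Relation.ReflTransGen D.adj a i ∧ ∃ q r, q ≠ r ∧ D.adj q a ∧ D.adj r a)) := by
  have hD : D.skeleton.CliqueFree 3 := htree.isAcyclic.cliqueFree le_rfl
  constructor
  · contrapose!
    rintro ⟨hnv, hnpar⟩
    have hpj : ∀ w, D.adj w j → w = i := fun w hw =>
      by_contra fun hwi => hnv w (D.isVStructure_of_cliqueFree hD (Ne.symm hwi) hij hw)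
    refine D.not_essential_of_subsingleton_parents (fun v hv q hq r hr => ?_) i
    rcases hv.cases_tail with rfl | ⟨z, hvz, hzj⟩
    · rw [hpj q hq, hpj r hr]
    · by_contra hqr
      exact hnpar v (hpj z hzj ▸ hvz) q r hqr hq hr
  · rintro (⟨k, hk⟩ | ⟨a, hai, q, r, hqr, hq, hr⟩) <;> refine ⟨hij, fun E hE => ?_⟩
    · exact ((hE.2 i j k).1 hk).2.1
    · have hqa := ((hE.2 q a r).1 (D.isVStructure_of_cliqueFree hD hqr hq hr)).2.1
      exact hE.adj_of_reflTransGen hD hq hqa hai hij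
end

section
/- Let 𝒢 be a DAG whose skeleton is a tree. If i → j is an essential arrow of 𝒢, then every edge of 𝒢 having j as an endpoint is essential in 𝒢. -/
open Classical

lemma SimpleGraph.IsAcyclic.not_adj_of_adj_of_adj {V : Type} {G : SimpleGraph V}
    (hG : G.IsAcyclic) {a b c : V} (hab : G.Adj a b) (hbc : G.Adj b c) : ¬ G.Adj a c :=
  fun hac => hG.cliqueFree le_rfl {a, b, c} (is3Clique_triple_iff.mpr ⟨hab, hac, hbc⟩)

namespace DAG

variable {V : Type} {D E : DAG V} {i j k : V}

lemma not_adj_of_adj (hij : D.adj i j) : ¬ D.adj j i :=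
  fun hji => D.acyclic i (.head hij (.single hji))

lemma ne_of_adj_of_adj (hij : D.adj i j) (hjk : D.adj j k) : i ≠ k := by
  rintro rfl
  exact not_adj_of_adj hij hjk

lemma isVStructure_of_not_skeleton_adj (hik : i ≠ k) (hij : D.adj i j) (hkj : D.adj k j)
    (hnadj : ¬ D.skeleton.Adj i k) : D.IsVStructure i j k :=
  ⟨hik, hij, hkj, fun h => hnadj (Or.inl h), fun h => hnadj (Or.inr h)⟩

lemma IsVStructure.essential_right (hv : D.IsVStructure i j k) : D.Essential k j :=
  ⟨hv.2.2.1, fun _ hE => ((hE.2 i j k).mp hv).2.2.1⟩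

/-- If `j → k` were reversed in some equivalent DAG, `i → j ← k` would be a new v-structure. -/
lemma Essential.of_adj_of_not_skeleton_adj (hij : D.Essential i j) (hjk : D.adj j k)
    (hnadj : ¬ D.skeleton.Adj i k) : D.Essential j k := by
  refine ⟨hjk, fun E hE => ?_⟩
  have hEjk : E.skeleton.Adj j k := hE.1 ▸ Or.inl hjk
  refine hEjk.resolve_right fun hEkj => not_adj_of_adj hjk ?_
  have hv : E.IsVStructure i j k :=
    isVStructure_of_not_skeleton_adj (ne_of_adj_of_adj hij.1 hjk) (hij.2 E hE) hEkj
      (hE.1 ▸ hnadj)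
  exact ((hE.2 i j k).mpr hv).2.2.1

end DAG

/-- **Essential arrows propagate.**  Let `D` be a DAG whose skeleton is a tree.  If `i → j`
is an essential arrow of `D`, then every edge of `D` having `j` as an endpoint is
essential in `D`. -/
theorem essential_arrows_at_a_node {p : ℕ} (D : DAG (Fin p)) (htree : D.skeleton.IsTree)
    (i j : Fin p) (h : D.Essential i j) :
    ∀ k, (D.adj j k → D.Essential j k) ∧ (D.adj k j → D.Essential k j) := by
  intro k
  have hnadj {a b : Fin p} (ha : D.skeleton.Adj a j) (hb : D.skeleton.Adj j b) :
      ¬ D.skeleton.Adj a b :=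
    htree.isAcyclic.not_adj_of_adj_of_adj ha hb
  refine ⟨fun hjk => h.of_adj_of_not_skeleton_adj hjk (hnadj (Or.inl h.1) (Or.inl hjk)),
    fun hkj => ?_⟩
  by_cases hki : k = i
  · exact hki ▸ h
  · exact (DAG.isVStructure_of_not_skeleton_adj (Ne.symm hki) h.1 hkj
      (hnadj (Or.inl h.1) (Or.inr hkj))).essential_right
end

section
/- Let G = G₁ ∪ G₂ be the disjoint union of undirected graphs G₁ = (V₁, E₁) and G₂ = (V₂, E₂). Then the polytope CIM_G is affinely equivalent to the product polytope CIM_{G₁} × CIM_{G₂}. -/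
open Classical

/-!
No arrow of a DAG with skeleton `G₁ ⊕g G₂` joins `V₁` to `V₂`, so its characteristic imset
vanishes on every set meeting both `V₁` and `V₂`, and on the remaining coordinates it is
the pair of imsets of its restrictions to `V₁` and `V₂`; conversely every pair of DAGs with
skeletons `G₁`, `G₂` arises from their disjoint sum. Hence restricting coordinates to subsets of
`V₁` and of `V₂` is a linear map, injective on the affine span of `CIM (G₁ ⊕g G₂)`, that maps the
vertex set onto the product of the vertex sets, and the convex hull of a product is the product
of the convex hulls.
-/

open Function

section

variable {V₁ V₂ : Type}

theorem Relation.TransGen.sumLiftRel {r : V₁ → V₁ → Prop} {s : V₂ → V₂ → Prop} {x y : V₁ ⊕ V₂}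
    (h : Relation.TransGen (Sum.LiftRel r s) x y) :
    Sum.LiftRel (Relation.TransGen r) (Relation.TransGen s) x y := by
  induction h with
  | single h => exact h.mono (fun _ _ => .single) (fun _ _ => .single)
  | tail _ h ih =>
    cases ih with
    | inl h₁ => cases h with | inl h₂ => exact .inl (h₁.tail h₂)
    | inr h₁ => cases h with | inr h₂ => exact .inr (h₁.tail h₂)

end

namespace DAG

variable {V W V₁ V₂ : Type}

theorem ext {D E : DAG V} (h : D.adj = E.adj) : D = E := by
  cases D; cases E; cases h; rfl

def comap (f : W ↪ V) (D : DAG V) : DAG W where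
  adj i j := D.adj (f i) (f j)
  acyclic v h := D.acyclic (f v) (h.lift f fun _ _ => id)

theorem skeleton_comap (f : W ↪ V) (D : DAG V) :
    (D.comap f).skeleton = D.skeleton.comap f := rfl

theorem imset_map (f : W ↪ V) (D : DAG V) (S : Finset W) :
    D.imset (S.map f) = (D.comap f).imset S := by
  unfold imset
  congr 1
  simp [comap]

protected def sum (D₁ : DAG V₁) (D₂ : DAG V₂) : DAG (V₁ ⊕ V₂) where
  adj := Sum.LiftRel D₁.adj D₂.adj
  acyclic v h := by
    cases v with
    | inl a => cases h.sumLiftRel with | inl h' => exact D₁.acyclic a h'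
    | inr b => cases h.sumLiftRel with | inr h' => exact D₂.acyclic b h'

theorem comap_inl_sum (D₁ : DAG V₁) (D₂ : DAG V₂) : (D₁.sum D₂).comap Embedding.inl = D₁ :=
  ext <| funext₂ fun _ _ => propext Sum.liftRel_inl_inl

theorem comap_inr_sum (D₁ : DAG V₁) (D₂ : DAG V₂) : (D₁.sum D₂).comap Embedding.inr = D₂ :=
  ext <| funext₂ fun _ _ => propext Sum.liftRel_inr_inr

theorem skeleton_sum (D₁ : DAG V₁) (D₂ : DAG V₂) :
    (D₁.sum D₂).skeleton = D₁.skeleton ⊕g D₂.skeleton := by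
  ext (_ | _) (_ | _) <;> simp [skeleton, DAG.sum]

theorem imset_eq_zero_of_mixed {G₁ : SimpleGraph V₁} {G₂ : SimpleGraph V₂} {D : DAG (V₁ ⊕ V₂)}
    (hD : D.skeleton = G₁ ⊕g G₂) {S : Finset (V₁ ⊕ V₂)} (h₁ : S.toLeft.Nonempty)
    (h₂ : S.toRight.Nonempty) : D.imset S = 0 := by
  have hadj {x y} (h : D.adj x y) : (G₁ ⊕g G₂).Adj x y := hD ▸ Or.inl h
  obtain ⟨a, ha⟩ := h₁
  obtain ⟨b, hb⟩ := h₂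
  rw [imset, if_neg]
  rintro ⟨-, i | i, hi, hall⟩
  · simpa using hadj (hall _ (Finset.mem_toRight.1 hb) Sum.inr_ne_inl)
  · simpa using hadj (hall _ (Finset.mem_toLeft.1 ha) Sum.inl_ne_inr)

end DAG

namespace SimpleGraph

variable {V₁ V₂ : Type}

@[simp]
theorem comap_inl_sum (G₁ : SimpleGraph V₁) (G₂ : SimpleGraph V₂) :
    (G₁ ⊕g G₂).comap Embedding.inl = G₁ := by
  ext; simp

@[simp]
theorem comap_inr_sum (G₁ : SimpleGraph V₁) (G₂ : SimpleGraph V₂) :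
    (G₁ ⊕g G₂).comap Embedding.inr = G₂ := by
  ext; simp

end SimpleGraph

section DisjointUnion

variable {V V₁ V₂ : Type}

def skeletonImsets (G : SimpleGraph V) : Set (Finset V → ℝ) :=
  {f | ∃ D : DAG V, D.skeleton = G ∧ f = D.imset}

theorem CIM_eq_convexHull (G : SimpleGraph V) : CIM G = convexHull ℝ (skeletonImsets G) := rfl

variable (V₁ V₂) in
noncomputable def restrictSum :
    (Finset (V₁ ⊕ V₂) → ℝ) →ₗ[ℝ] (Finset V₁ → ℝ) × (Finset V₂ → ℝ) :=
  (LinearMap.funLeft ℝ ℝ (Finset.map Embedding.inl)).prod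
    (LinearMap.funLeft ℝ ℝ (Finset.map Embedding.inr))

theorem restrictSum_imset (D : DAG (V₁ ⊕ V₂)) :
    restrictSum V₁ V₂ D.imset = ((D.comap Embedding.inl).imset, (D.comap Embedding.inr).imset) :=
  Prod.ext (funext (D.imset_map _)) (funext (D.imset_map _))

theorem restrictSum_image_skeletonImsets (G₁ : SimpleGraph V₁) (G₂ : SimpleGraph V₂) :
    restrictSum V₁ V₂ '' skeletonImsets (G₁ ⊕g G₂) = skeletonImsets G₁ ×ˢ skeletonImsets G₂ := by
  ext p
  constructor
  · rintro ⟨_, ⟨D, hD, rfl⟩, rfl⟩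
    rw [restrictSum_imset]
    exact ⟨⟨_, by simp [DAG.skeleton_comap, hD], rfl⟩, ⟨_, by simp [DAG.skeleton_comap, hD], rfl⟩⟩
  · rintro ⟨⟨D₁, rfl, h₁⟩, ⟨D₂, rfl, h₂⟩⟩
    refine ⟨_, ⟨D₁.sum D₂, DAG.skeleton_sum D₁ D₂, rfl⟩, ?_⟩
    rw [restrictSum_imset, DAG.comap_inl_sum, DAG.comap_inr_sum, ← h₁, ← h₂]

theorem restrictSum_image_CIM (G₁ : SimpleGraph V₁) (G₂ : SimpleGraph V₂) :
    restrictSum V₁ V₂ '' CIM (G₁ ⊕g G₂) = CIM G₁ ×ˢ CIM G₂ := by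
  rw [CIM_eq_convexHull, LinearMap.image_convexHull, restrictSum_image_skeletonImsets,
    convexHull_prod]
  rfl

variable (V₁ V₂) in
noncomputable def vanishingOnMixed : Submodule ℝ (Finset (V₁ ⊕ V₂) → ℝ) where
  carrier := {c | ∀ S : Finset (V₁ ⊕ V₂), S.toLeft.Nonempty → S.toRight.Nonempty → c S = 0}
  add_mem' ha hb S h₁ h₂ := by simp [ha S h₁ h₂, hb S h₁ h₂]
  zero_mem' _ _ _ := rfl
  smul_mem' r _ ha S h₁ h₂ := by simp [ha S h₁ h₂]

theorem CIM_subset_vanishingOnMixed (G₁ : SimpleGraph V₁) (G₂ : SimpleGraph V₂) :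
    CIM (G₁ ⊕g G₂) ⊆ vanishingOnMixed V₁ V₂ :=
  convexHull_min (fun _ ⟨_, hD, hc⟩ _ h₁ h₂ => hc ▸ DAG.imset_eq_zero_of_mixed hD h₁ h₂)
    (vanishingOnMixed V₁ V₂).convex

theorem affineSpan_CIM_subset_vanishingOnMixed (G₁ : SimpleGraph V₁) (G₂ : SimpleGraph V₂) :
    (affineSpan ℝ (CIM (G₁ ⊕g G₂)) : Set (Finset (V₁ ⊕ V₂) → ℝ)) ⊆ vanishingOnMixed V₁ V₂ :=
  (affineSpan_le (Q := (vanishingOnMixed V₁ V₂).toAffineSubspace)).2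
    (CIM_subset_vanishingOnMixed G₁ G₂)

theorem injOn_restrictSum_vanishingOnMixed :
    Set.InjOn (restrictSum V₁ V₂) (vanishingOnMixed V₁ V₂) := by
  intro c hc c' hc' h
  funext S
  rcases S.toLeft.eq_empty_or_nonempty with hL | hL
  · rw [← S.toLeft_disjSum_toRight, hL, Finset.empty_disjSum]
    exact congrFun (congrArg Prod.snd h) _
  rcases S.toRight.eq_empty_or_nonempty with hR | hR
  · rw [← S.toLeft_disjSum_toRight, hR, Finset.disjSum_empty]
    exact congrFun (congrArg Prod.fst h) _
  rw [hc S hL hR, hc' S hL hR]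

end DisjointUnion

/-- **CIM of a disjoint union.**  If `G` is the disjoint union of `G₁` and `G₂`, then
`CIM_G` is affinely equivalent to the product polytope `CIM_{G₁} × CIM_{G₂}`: there is an
affine map, injective on the affine span of `CIM_G`, carrying `CIM_G` onto
`CIM_{G₁} × CIM_{G₂}`. -/
theorem cim_disjoint_union_affinely_equiv {V₁ V₂ : Type}
    (G₁ : SimpleGraph V₁) (G₂ : SimpleGraph V₂) :
    ∃ f : (Finset (V₁ ⊕ V₂) → ℝ) →ᵃ[ℝ] ((Finset V₁ → ℝ) × (Finset V₂ → ℝ)),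
      Set.InjOn f (affineSpan ℝ (CIM (G₁ ⊕g G₂)) : Set (Finset (V₁ ⊕ V₂) → ℝ)) ∧
      f '' CIM (G₁ ⊕g G₂) = (CIM G₁) ×ˢ (CIM G₂) :=
  ⟨(restrictSum V₁ V₂).toAffineMap,
    injOn_restrictSum_vanishingOnMixed.mono (affineSpan_CIM_subset_vanishingOnMixed G₁ G₂),
    restrictSum_image_CIM G₁ G₂⟩
end
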